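/- A Killing tensor K_{A,B,C} is invariant under the translations generated by X₃ = ∂/∂z, i.e. ∂K_{A,B,C}/∂z ≡ 0 on ℝ³, if and only if there exist real numbers a₁, a₂, a₃, α₁, α₂, α₃, b₁₃, b₂₃, β₁, c₃ such that its components at (x,y,z) are K¹¹ = a₁ + 2b₁₃y + c₃y², K¹² = α₃ − b₁₃x + b₂₃y − c₃xy, K¹³ = α₂ − β₁y, K²² = a₂ − 2b₂₃x + c₃x², K²³ = α₁ + β₁x, K³³ = a₃. -/

import Mathlib

open Matrix

/-- 3×3 real matrices. -/
abbrev M3 := Matrix (Fin 3) (Fin 3) ℝ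

/-- The cross-product matrix `Sₓ`, satisfying `Sₓ v = x × v`. -/
def Smat (x : Fin 3 → ℝ) : M3 :=
  !![0, -x 2, x 1; x 2, 0, -x 0; -x 1, x 0, 0]

/-- The Killing tensor field `K_{A,B,C}(x) = A + Sₓ Bᵀ + B Sₓᵀ + Sₓ C Sₓᵀ`. -/
def KABC (A B C : M3) (x : Fin 3 → ℝ) : M3 :=
  A + Smat x * Bᵀ + B * (Smat x)ᵀ + Smat x * C * (Smat x)ᵀ

/-- Partial derivative `∂_k f` at `x`. -/
noncomputable def pder (k : Fin 3) (f : (Fin 3 → ℝ) → ℝ) (x : Fin 3 → ℝ) : ℝ :=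
  fderiv ℝ f x (Pi.single k 1)

/-! Since `Sₓ` is linear in `x`, `K(x + t v) = K(x) + t D(x, v) + t² S_v C S_vᵀ`, so `∂_z K` at `x`
is `D(x, e_z)`, which is affine in `x`. Its vanishing at `x = 0, e_x, e_y` forces `B` and `C` into
the shape for which the components of `K` are exactly the stated polynomials in `x, y`. Conversely,
components of that form are constant along `z`, so their `z`-derivatives vanish. -/

section LineDerivative

variable {𝕜 E F : Type*} [NontriviallyNormedField 𝕜] [NormedAddCommGroup E] [NormedSpace 𝕜 E]
  [NormedAddCommGroup F] [NormedSpace 𝕜 F]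

theorem fderiv_apply_eq_zero_of_forall_add_smul_eq {f : E → F} {v : E}
    (hf : ∀ x (t : 𝕜), f (x + t • v) = f x) (x : E) : fderiv 𝕜 f x v = 0 := by
  by_cases hd : DifferentiableAt 𝕜 f x
  · rw [← hd.lineDeriv_eq_fderiv, lineDeriv]
    simp [hf]
  · simp [fderiv_zero_of_not_differentiableAt hd]

theorem fderiv_apply_eq_of_add_smul_eq_quadratic {f : E → 𝕜} {x v : E}
    (hf : DifferentiableAt 𝕜 f x) {a b c : 𝕜} (h : ∀ t : 𝕜, f (x + t • v) = a + t * b + t ^ 2 * c) :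
    fderiv 𝕜 f x v = b := by
  rw [← hf.lineDeriv_eq_fderiv]
  refine HasLineDerivAt.lineDeriv ?_
  rw [HasLineDerivAt, funext h]
  exact ((((hasDerivAt_id (0 : 𝕜)).mul_const b).const_add a).add
    (((hasDerivAt_id (0 : 𝕜)).pow 2).mul_const c)).congr_deriv (by simp)

end LineDerivative

theorem Smat_add (x y : Fin 3 → ℝ) : Smat (x + y) = Smat x + Smat y := by
  ext i j; fin_cases i <;> fin_cases j <;> simp [Smat] <;> ring

theorem Smat_smul (t : ℝ) (x : Fin 3 → ℝ) : Smat (t • x) = t • Smat x := by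
  ext i j; fin_cases i <;> fin_cases j <;> simp [Smat]

@[fun_prop]
theorem differentiable_Smat_apply (i j : Fin 3) : Differentiable ℝ (fun x => Smat x i j) := by
  fin_cases i <;> fin_cases j <;> simp [Smat] <;> fun_prop

theorem differentiable_KABC_apply (A B C : M3) (i j : Fin 3) :
    Differentiable ℝ (fun x => KABC A B C x i j) := by
  simp only [KABC, Matrix.add_apply, mul_apply, transpose_apply, Fin.sum_univ_three]
  fun_prop

def KABCDeriv (B C : M3) (x v : Fin 3 → ℝ) : M3 :=
  Smat v * Bᵀ + B * (Smat v)ᵀ + Smat x * C * (Smat v)ᵀ + Smat v * C * (Smat x)ᵀ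

theorem KABC_add_smul (A B C : M3) (x v : Fin 3 → ℝ) (t : ℝ) :
    KABC A B C (x + t • v) =
      KABC A B C x + t • KABCDeriv B C x v + t ^ 2 • (Smat v * C * (Smat v)ᵀ) := by
  simp only [KABC, KABCDeriv, Smat_add, Smat_smul, transpose_add, transpose_smul, add_mul, mul_add,
    Matrix.smul_mul, Matrix.mul_smul, smul_add, smul_smul, Matrix.mul_assoc]
  module

theorem pder_KABC_apply (A B C : M3) (k i j : Fin 3) (x : Fin 3 → ℝ) :
    pder k (fun y => KABC A B C y i j) x = KABCDeriv B C x (Pi.single k 1) i j :=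
  fderiv_apply_eq_of_add_smul_eq_quadratic (differentiable_KABC_apply A B C i j x)
    (a := KABC A B C x i j) (c := (Smat (Pi.single k 1) * C * (Smat (Pi.single k 1))ᵀ) i j)
    fun t => by simp [KABC_add_smul]

theorem KABC_isSymm {A C : M3} (hA : A.IsSymm) (hC : C.IsSymm) (B : M3) (x : Fin 3 → ℝ) :
    (KABC A B C x).IsSymm := by
  simp only [Matrix.IsSymm, KABC, transpose_add, transpose_mul, transpose_transpose, hA.eq, hC.eq,
    Matrix.mul_assoc]
  abel

theorem coeffs_of_KABCDeriv_single_two_eq_zero {B C : M3} (hC : C.IsSymm)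
    (h : ∀ x i j, KABCDeriv B C x (Pi.single 2 1) i j = 0) :
    B 0 1 = 0 ∧ B 1 0 = 0 ∧ B 2 0 = 0 ∧ B 2 1 = 0 ∧ B 1 1 = B 0 0 ∧
      C 0 0 = 0 ∧ C 0 1 = 0 ∧ C 0 2 = 0 ∧ C 1 1 = 0 ∧ C 1 2 = 0 := by
  have h₀ := h 0
  have h₁ := h (Pi.single 0 1)
  have h₂ := h (Pi.single 1 1)
  simp only [KABCDeriv, Matrix.add_apply, mul_apply, transpose_apply, Fin.sum_univ_three] at h₀ h₁ h₂
  simp [Smat, Fin.forall_fin_succ, hC.apply 0 1, hC.apply 0 2, hC.apply 1 2] at h₀ h₁ h₂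
  obtain ⟨⟨hB01, hB00, hB21⟩, ⟨-, hB10, hB20⟩, -⟩ := h₀
  obtain ⟨⟨-, hC12, hC11⟩, ⟨-, hC02, hC01⟩, -⟩ := h₁
  obtain ⟨-, ⟨-, -, hC00⟩, -⟩ := h₂
  refine ⟨?_, ?_, ?_, ?_, ?_, ?_, ?_, ?_, ?_, ?_⟩ <;> linarith

/-- STATEMENT 8: a Killing tensor `K_{A,B,C}` is invariant under the translations
generated by `X₃ = ∂/∂z` iff its components have the stated translational form. -/
theorem z_translation_invariant_Killing_tensor_form
    (A B C : M3) (hA : A.IsSymm) (hC : C.IsSymm) :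
    (∀ (x : Fin 3 → ℝ) (i j : Fin 3),
        pder 2 (fun y => KABC A B C y i j) x = 0) ↔
    ∃ a₁ a₂ a₃ α₁ α₂ α₃ b₁₃ b₂₃ β₁ c₃ : ℝ, ∀ p : Fin 3 → ℝ,
      KABC A B C p 0 0 = a₁ + 2 * b₁₃ * p 1 + c₃ * (p 1) ^ 2 ∧
      KABC A B C p 0 1 = α₃ - b₁₃ * p 0 + b₂₃ * p 1 - c₃ * p 0 * p 1 ∧
      KABC A B C p 0 2 = α₂ - β₁ * p 1 ∧
      KABC A B C p 1 1 = a₂ - 2 * b₂₃ * p 0 + c₃ * (p 0) ^ 2 ∧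
      KABC A B C p 1 2 = α₁ + β₁ * p 0 ∧
      KABC A B C p 2 2 = a₃ := by
  constructor
  · intro h
    obtain ⟨hB01, hB10, hB20, hB21, hB11, hC00, hC01, hC02, hC11, hC12⟩ :=
      coeffs_of_KABCDeriv_single_two_eq_zero hC fun x i j =>
        (pder_KABC_apply A B C 2 i j x).symm.trans (h x i j)
    refine ⟨A 0 0, A 1 1, A 2 2, A 1 2, A 0 2, A 0 1, B 0 2, B 1 2, B 0 0 - B 2 2, C 2 2,
      fun p => ⟨?_, ?_, ?_, ?_, ?_, ?_⟩⟩ <;>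
    simp only [KABC, Matrix.add_apply, mul_apply, transpose_apply, Fin.sum_univ_three] <;>
    simp [Smat, hC.apply 0 1, hC.apply 0 2, hC.apply 1 2, hB01, hB10, hB20, hB21, hB11, hC00, hC01,
      hC02, hC11, hC12] <;>
    ring
  · rintro ⟨a₁, a₂, a₃, α₁, α₂, α₃, b₁₃, b₂₃, β₁, c₃, h⟩ x i j
    refine fderiv_apply_eq_zero_of_forall_add_smul_eq (fun y t => ?_) x
    have hK := fun z => (KABC_isSymm hA hC B z)
    fin_cases i <;> fin_cases j <;> simp [(hK _).apply 0 1, (hK _).apply 0 2, (hK _).apply 1 2, h]
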